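/- Let d ∈ ℕ, m ≥ 1 a natural number, U ∈ [0,1] a real number, and x ∈ ℝ^d with ‖x‖₂ ≤ U. Then √(m/4) ≤ ‖P(x)‖₂ ≤ √(m/4 + U^{2^{m+1}}). -/

import Mathlib

/-! Each appended coordinate satisfies `(1/2 - t^(2^(i+1)))^2 = 1/4 + t^(2^(i+2)) - t^(2^(i+1))`,
so the squared norm of `P(x)` telescopes to `m/4 + ‖x‖^(2^(m+1))`. -/

/-- The preprocessing transformation P : ℝ^d → ℝ^{d+m},
P(x) = [x; 1/2 − ‖x‖₂^{2^1}; 1/2 − ‖x‖₂^{2^2}; …; 1/2 − ‖x‖₂^{2^m}]. -/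
noncomputable def preprocess (d m : ℕ) (x : EuclideanSpace ℝ (Fin d)) :
    EuclideanSpace ℝ (Fin (d + m)) :=
  WithLp.toLp 2 fun (i : Fin (d + m)) => if h : (i : ℕ) < d then x ⟨i, h⟩
    else 1 / 2 - ‖x‖ ^ (2 ^ ((i : ℕ) - d + 1))

lemma sum_range_sq_half_sub_pow_two_pow (t : ℝ) (m : ℕ) :
    ∑ i ∈ Finset.range m, (1 / 2 - t ^ 2 ^ (i + 1)) ^ 2 =
      m / 4 + (t ^ 2 ^ (m + 1) - t ^ 2) := by
  have hsq (i : ℕ) : (1 / 2 - t ^ 2 ^ (i + 1)) ^ 2 =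
      1 / 4 + (t ^ 2 ^ (i + 1 + 1) - t ^ 2 ^ (i + 1)) := by
    rw [pow_succ 2 (i + 1), pow_mul]
    ring
  simp only [hsq, Finset.sum_add_distrib, Finset.sum_const, Finset.card_range, nsmul_eq_mul,
    Finset.sum_range_sub (fun i => t ^ 2 ^ (i + 1)), zero_add, pow_one]
  ring

lemma preprocess_castAdd (d m : ℕ) (x : EuclideanSpace ℝ (Fin d)) (i : Fin d) :
    preprocess d m x (Fin.castAdd m i) = x i := by
  simp [preprocess]

lemma preprocess_natAdd (d m : ℕ) (x : EuclideanSpace ℝ (Fin d)) (i : Fin m) :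
    preprocess d m x (Fin.natAdd d i) = 1 / 2 - ‖x‖ ^ 2 ^ ((i : ℕ) + 1) := by
  simp [preprocess]

lemma norm_preprocess_sq (d m : ℕ) (x : EuclideanSpace ℝ (Fin d)) :
    ‖preprocess d m x‖ ^ 2 = m / 4 + ‖x‖ ^ 2 ^ (m + 1) := by
  rw [EuclideanSpace.norm_sq_eq, Fin.sum_univ_add]
  simp only [Real.norm_eq_abs, sq_abs, preprocess_castAdd, preprocess_natAdd]
  rw [Fin.sum_univ_eq_sum_range (fun i => (1 / 2 - ‖x‖ ^ 2 ^ (i + 1)) ^ 2),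
    sum_range_sq_half_sub_pow_two_pow, ← EuclideanSpace.real_norm_sq_eq]
  ring

theorem norm_preprocess_bounds_general (d m : ℕ)
    (U : ℝ)
    (x : EuclideanSpace ℝ (Fin d)) (hx : ‖x‖ ≤ U) :
    Real.sqrt ((m : ℝ) / 4) ≤ ‖preprocess d m x‖ ∧
      ‖preprocess d m x‖ ≤ Real.sqrt ((m : ℝ) / 4 + U ^ (2 ^ (m + 1))) := by
  rw [← Real.sqrt_sq (norm_nonneg (preprocess d m x)), norm_preprocess_sq]
  have hpow : ‖x‖ ^ 2 ^ (m + 1) ≤ U ^ 2 ^ (m + 1) := pow_le_pow_left₀ (norm_nonneg x) hx _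
  constructor <;> apply Real.sqrt_le_sqrt
  · linarith [pow_nonneg (norm_nonneg x) (2 ^ (m + 1))]
  · linarith

/-- for m ≥ 1, U ∈ [0,1] and ‖x‖₂ ≤ U,
√(m/4) ≤ ‖P(x)‖₂ ≤ √(m/4 + U^{2^{m+1}}). -/
theorem norm_preprocess_bounds (d m : ℕ) (hm : 1 ≤ m)
    (U : ℝ) (hU : U ∈ Set.Icc (0 : ℝ) 1)
    (x : EuclideanSpace ℝ (Fin d)) (hx : ‖x‖ ≤ U) :
    Real.sqrt ((m : ℝ) / 4) ≤ ‖preprocess d m x‖ ∧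
      ‖preprocess d m x‖ ≤ Real.sqrt ((m : ℝ) / 4 + U ^ (2 ^ (m + 1))) :=
  norm_preprocess_bounds_general d m U x hx
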